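/- Let (X,𝒳) be a measurable space, let (Y,𝒴,ν) be a finite measure space with ν(Y) = 1, and let ρ: X×Y → [0,∞] be a measurable distortion function. Let k ∈ (0,∞), suppose ν is ρ^{1/k}-superregular of dimension m ∈ (0,∞) with superregularity constants b ∈ (0,∞) and δ₀ ∈ (0,∞], and assume β := sup_{x∈X,y∈Y} ρ(x,y)^{1/k} < ∞ whenever δ₀ < ∞. Then every random variable X taking values in (X,𝒳) satisfies, for all n ∈ ℕ: V_n(X) ≤ Γ(1+k/m)·(b·n)^{-k/m} if β ≤ δ₀, and V_n(X) ≤ Γ(1+k/m)·(b·n)^{-k/m} + (β^k − δ₀^k)·e^{-b·n·δ₀^m} if β > δ₀. -/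

import Mathlib

/-!
Random coding: draw a codebook of `n` independent `ν`-distributed points and quantize every `x`
to the nearest one. Some deterministic codebook does at least as well as the average, so by
Fubini it suffices to bound `E[min_i ρ(x, Y_i)]` for each fixed `x`. By the layer-cake
formula this is `∫₀^∞ P(min_i ρ(x, Y_i) > t) dt`. Superregularity gives
`P(ρ(x, Y) > t) ≤ 1 - b t^{m/k} ≤ exp(-b t^{m/k})` as long as `t^{1/k} < δ₀`, so the tail of
the minimum of `n` samples is at most `exp(-n b t^{m/k})`, whose integral is
`Γ(1 + k/m) (b n)^{-k/m}`. On `[δ₀^k, β^k)` the tail stays below `exp(-n b δ₀^m)`, and it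
vanishes beyond `β^k`. A probability measure cannot be superregular at every scale, so `δ₀`,
and with it `β`, is finite.
-/

open MeasureTheory
open scoped ENNReal Classical

/-- `e^{-t}` for `t ∈ [0,∞]`, with the convention `e^{-∞} = 0`. -/
noncomputable def expNeg (t : ℝ≥0∞) : ℝ≥0∞ :=
  if t = ∞ then 0 else ENNReal.ofReal (Real.exp (-t.toReal))

/-- The `n`-th quantization error `V_n(X) = inf_f E[ρ(X, f(X))]`, the infimum being over
all measurable maps `f : X → Y` whose range contains at most `n` points. -/
noncomputable def quantErr {X Y : Type*} [MeasurableSpace X] [MeasurableSpace Y]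
    (μX : Measure X) (ρ : X → Y → ℝ≥0∞) (n : ℕ) : ℝ≥0∞ :=
  ⨅ (f : X → Y)
    (_ : Measurable f ∧ ∃ s : Finset Y, s.card ≤ n ∧ ∀ x, f x ∈ s),
    ∫⁻ x, ρ x (f x) ∂μX

open Set Real

theorem expNeg_ofReal {a : ℝ} (ha : 0 ≤ a) :
    expNeg (ENNReal.ofReal a) = ENNReal.ofReal (exp (-a)) := by
  simp [expNeg, ENNReal.toReal_ofReal ha]

theorem lintegral_exp_neg_mul_rpow {c p : ℝ} (hc : 0 < c) (hp : 0 < p) :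
    ∫⁻ t in Ioi 0, ENNReal.ofReal (exp (-c * t ^ p)) =
      ENNReal.ofReal (Gamma (1 + 1 / p)) * ENNReal.ofReal c ^ (-(1 / p)) := by
  have hint : IntegrableOn (fun t : ℝ => exp (-c * t ^ p)) (Ioi 0) := by
    simpa using integrableOn_rpow_mul_exp_neg_mul_rpow neg_one_lt_zero hp hc
  rw [← ofReal_integral_eq_lintegral_ofReal hint (.of_forall fun _ => (exp_pos _).le),
    integral_exp_neg_mul_rpow hp hc, ENNReal.ofReal_rpow_of_pos hc, mul_comm, add_comm,
    neg_div, ENNReal.ofReal_mul (Gamma_pos_of_pos (by positivity)).le]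

theorem lintegral_eq_lintegral_meas_ofReal_lt {Ω : Type*} [MeasurableSpace Ω] (μ : Measure Ω)
    {Z : Ω → ℝ≥0∞} (hZ : Measurable Z) (hZ_ne_top : ∀ ω, Z ω ≠ ∞) :
    ∫⁻ ω, Z ω ∂μ = ∫⁻ t in Ioi 0, μ {ω | ENNReal.ofReal t < Z ω} := by
  calc ∫⁻ ω, Z ω ∂μ = ∫⁻ ω, ENNReal.ofReal (Z ω).toReal ∂μ :=
        lintegral_congr fun ω => (ENNReal.ofReal_toReal (hZ_ne_top ω)).symm
    _ = ∫⁻ t in Ioi 0, μ {ω | t < (Z ω).toReal} :=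
        lintegral_eq_lintegral_meas_lt μ (.of_forall fun _ => ENNReal.toReal_nonneg)
          hZ.ennreal_toReal.aemeasurable
    _ = ∫⁻ t in Ioi 0, μ {ω | ENNReal.ofReal t < Z ω} :=
        setLIntegral_congr_fun measurableSet_Ioi fun t ht => by
          simp_rw [ENNReal.ofReal_lt_iff_lt_toReal (le_of_lt ht) (hZ_ne_top _)]

theorem lintegral_le_of_meas_lt_le_exp {Ω : Type*} [MeasurableSpace Ω] {μ : Measure Ω}
    {Z : Ω → ℝ≥0∞} (hZ : Measurable Z) {c p T M : ℝ} (hT : 0 < T)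
    (hZM : ∀ ω, Z ω ≤ ENNReal.ofReal M)
    (htail : ∀ t, 0 < t → t < T →
      μ {ω | ENNReal.ofReal t < Z ω} ≤ ENNReal.ofReal (exp (-c * t ^ p))) :
    ∫⁻ ω, Z ω ∂μ ≤ (∫⁻ t in Ioi 0, ENNReal.ofReal (exp (-c * t ^ p))) +
      ENNReal.ofReal (exp (-c * T ^ p)) * ENNReal.ofReal (M - T) := by
  set C := ENNReal.ofReal (exp (-c * T ^ p))
  have htail_ge : ∀ t, T ≤ t → μ {ω | ENNReal.ofReal t < Z ω} ≤ C := by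
    intro t ht
    have hcont : ContinuousAt (fun s => ENNReal.ofReal (exp (-c * s ^ p))) T :=
      ENNReal.continuous_ofReal.continuousAt.comp <| continuous_exp.continuousAt.comp <|
        continuousAt_const.mul (continuousAt_rpow_const T p (Or.inl hT.ne'))
    refine ge_of_tendsto (x := nhdsWithin T (Iio T))
      (hcont.tendsto.mono_left nhdsWithin_le_nhds) ?_
    filter_upwards [Ioo_mem_nhdsLT hT] with s hs
    refine (measure_mono fun ω hω => ?_).trans (htail s hs.1 hs.2)
    exact (ENNReal.ofReal_le_ofReal (hs.2.le.trans ht)).trans_lt hω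
  have hpointwise : ∀ t ∈ Ioi (0 : ℝ), μ {ω | ENNReal.ofReal t < Z ω} ≤
      ENNReal.ofReal (exp (-c * t ^ p)) + (Ico T M).indicator (fun _ => C) t := by
    intro t ht
    rcases lt_or_ge t T with htT | hTt
    · exact le_add_right (htail t ht htT)
    rcases lt_or_ge t M with htM | hMt
    · rw [indicator_of_mem (show t ∈ Ico T M from ⟨hTt, htM⟩)]
      exact le_add_left (htail_ge t hTt)
    · have hempty : {ω | ENNReal.ofReal t < Z ω} = ∅ :=
        eq_empty_of_forall_notMem fun ω hω =>
          (hZM ω).not_gt ((ENNReal.ofReal_le_ofReal hMt).trans_lt hω)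
      simp [hempty]
  have hZ_ne_top : ∀ ω, Z ω ≠ ∞ := fun ω =>
    ne_top_of_le_ne_top ENNReal.ofReal_ne_top (hZM ω)
  calc ∫⁻ ω, Z ω ∂μ = ∫⁻ t in Ioi 0, μ {ω | ENNReal.ofReal t < Z ω} :=
        lintegral_eq_lintegral_meas_ofReal_lt μ hZ hZ_ne_top
    _ ≤ ∫⁻ t in Ioi 0,
          ENNReal.ofReal (exp (-c * t ^ p)) + (Ico T M).indicator (fun _ => C) t :=
        setLIntegral_mono' measurableSet_Ioi hpointwise
    _ = (∫⁻ t in Ioi 0, ENNReal.ofReal (exp (-c * t ^ p))) +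
          ∫⁻ t in Ioi 0, (Ico T M).indicator (fun _ => C) t :=
        lintegral_add_right _ (measurable_const.indicator measurableSet_Ico)
    _ ≤ (∫⁻ t in Ioi 0, ENNReal.ofReal (exp (-c * t ^ p))) + C * ENNReal.ofReal (M - T) := by
        gcongr
        calc ∫⁻ t in Ioi 0, (Ico T M).indicator (fun _ => C) t
            ≤ ∫⁻ t, (Ico T M).indicator (fun _ => C) t := setLIntegral_le_lintegral _ _
          _ = C * ENNReal.ofReal (M - T) := by
            rw [lintegral_indicator_const measurableSet_Ico, Real.volume_Ico]

section Quantizer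

variable {X Y : Type*} [MeasurableSpace X] [MeasurableSpace Y] {ρ : X → Y → ℝ≥0∞}

theorem exists_measurable_nearest (hρ : Measurable (Function.uncurry ρ)) {s : Finset Y}
    (hs : s.Nonempty) :
    ∃ f : X → Y, Measurable f ∧ (∀ x, f x ∈ s) ∧ ∀ x, ρ x (f x) = s.inf (ρ x) := by
  induction hs using Finset.Nonempty.cons_induction with
  | singleton a => exact ⟨fun _ => a, measurable_const, by simp, by simp⟩
  | cons a s ha hs ih =>
    obtain ⟨f, hf, hfs, hfρ⟩ := ih
    have hcmp : MeasurableSet {x | ρ x a ≤ ρ x (f x)} :=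
      measurableSet_le (hρ.comp (measurable_id.prodMk measurable_const))
        (hρ.comp (measurable_id.prodMk hf))
    refine ⟨fun x => if ρ x a ≤ ρ x (f x) then a else f x,
      Measurable.ite hcmp measurable_const hf, fun x => ?_, fun x => ?_⟩
    · dsimp only
      split_ifs <;> simp [hfs x]
    · rw [Finset.inf_cons, ← hfρ x]
      dsimp only
      split_ifs with h
      · exact (inf_eq_left.2 h).symm
      · exact (inf_eq_right.2 (not_le.1 h).le).symm

theorem quantErr_le_lintegral_iInf (hρ : Measurable (Function.uncurry ρ)) (μX : Measure X)
    {n : ℕ} (hn : 0 < n) (y : Fin n → Y) :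
    quantErr μX ρ n ≤ ∫⁻ x, ⨅ i, ρ x (y i) ∂μX := by
  have : Nonempty (Fin n) := ⟨⟨0, hn⟩⟩
  obtain ⟨f, hf, hfs, hfρ⟩ :=
    exists_measurable_nearest hρ (Finset.univ_nonempty.image y : (Finset.univ.image y).Nonempty)
  refine iInf₂_le_of_le f ⟨hf, _, Finset.card_image_le.trans (by simp), hfs⟩ (le_of_eq ?_)
  refine lintegral_congr fun x => ?_
  rw [hfρ x, Finset.inf_image, Finset.inf_univ_eq_iInf]
  rfl

theorem quantErr_le_of_forall_lintegral_iInf_le (hρ : Measurable (Function.uncurry ρ))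
    (μX : Measure X) [IsProbabilityMeasure μX] {n : ℕ} (hn : 0 < n)
    (P : Measure (Fin n → Y)) [IsProbabilityMeasure P] {R : ℝ≥0∞}
    (hR : ∀ x, ∫⁻ y, ⨅ i, ρ x (y i) ∂P ≤ R) :
    quantErr μX ρ n ≤ R := by
  have hmeas : Measurable (Function.uncurry fun (y : Fin n → Y) x => ⨅ i, ρ x (y i)) :=
    .iInf fun i =>
      hρ.comp (measurable_snd.prodMk ((measurable_pi_apply i).comp measurable_fst))
  calc quantErr μX ρ n = ∫⁻ _, quantErr μX ρ n ∂P := by simp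
    _ ≤ ∫⁻ y, ∫⁻ x, ⨅ i, ρ x (y i) ∂μX ∂P :=
        lintegral_mono fun y => quantErr_le_lintegral_iInf hρ μX hn y
    _ = ∫⁻ x, ∫⁻ y, ⨅ i, ρ x (y i) ∂P ∂μX := lintegral_lintegral_swap hmeas.aemeasurable
    _ ≤ ∫⁻ _, R ∂μX := lintegral_mono hR
    _ = R := by simp

end Quantizer

theorem measure_le_ofReal_exp_neg_of_le_measure_compl {Y : Type*} [MeasurableSpace Y]
    {ν : Measure Y} [IsProbabilityMeasure ν] {s : Set Y} (hs : MeasurableSet s) {a : ℝ}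
    (ha : 0 ≤ a) (has : ENNReal.ofReal a ≤ ν sᶜ) :
    ν s ≤ ENNReal.ofReal (exp (-a)) :=
  calc ν s = 1 - ν sᶜ := by
        rw [prob_compl_eq_one_sub hs, ENNReal.sub_sub_cancel ENNReal.one_ne_top prob_le_one]
    _ ≤ 1 - ENNReal.ofReal a := tsub_le_tsub_left has 1
    _ = ENNReal.ofReal (1 - a) := by rw [ENNReal.ofReal_sub _ ha, ENNReal.ofReal_one]
    _ ≤ ENNReal.ofReal (exp (-a)) :=
        ENNReal.ofReal_le_ofReal (by linarith [add_one_le_exp (-a)])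

theorem MeasureTheory.Measure.pi_lt_iInf_le_pow {ι Y : Type*} [Fintype ι] [MeasurableSpace Y]
    (ν : Measure Y) [SigmaFinite ν] (g : Y → ℝ≥0∞) (c : ℝ≥0∞) :
    Measure.pi (fun _ : ι => ν) {v | c < ⨅ i, g (v i)} ≤
      ν {y | c < g y} ^ Fintype.card ι := by
  calc Measure.pi (fun _ : ι => ν) {v | c < ⨅ i, g (v i)}
      ≤ Measure.pi (fun _ : ι => ν) (univ.pi fun _ => {y | c < g y}) :=
        measure_mono fun v hv i _ => show c < g (v i) from hv.trans_le (iInf_le _ i)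
    _ = ν {y | c < g y} ^ Fintype.card ι := by simp [Measure.pi_pi]

section Superregular

variable {X Y : Type*} [MeasurableSpace Y]

def IsSuperregular (ν : Measure Y) (σ : X → Y → ℝ≥0∞) (m b : ℝ) (δ₀ : ℝ≥0∞) : Prop :=
  ∀ x, ∀ δ : ℝ, 0 < δ → ENNReal.ofReal δ < δ₀ →
    ENNReal.ofReal (b * δ ^ m) ≤ ν {y | σ x y < ENNReal.ofReal δ}

namespace IsSuperregular

variable {ν : Measure Y} {σ : X → Y → ℝ≥0∞} {m b : ℝ} {δ₀ : ℝ≥0∞}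

theorem ne_top [IsProbabilityMeasure ν] [Nonempty X] (h : IsSuperregular ν σ m b δ₀)
    (hm : 0 < m) (hb : 0 < b) : δ₀ ≠ ∞ := by
  intro hδ₀
  set δ : ℝ := (2 / b) ^ (1 / m)
  have hδ : b * δ ^ m = 2 := by
    rw [← rpow_mul (by positivity), one_div_mul_cancel hm.ne', rpow_one]
    field_simp
  have h2 := (h (Classical.arbitrary X) δ (by positivity) (hδ₀ ▸ ENNReal.ofReal_lt_top)).trans
    prob_le_one
  rw [hδ, ENNReal.ofReal_ofNat] at h2
  norm_num at h2

theorem measure_le_le_exp [IsProbabilityMeasure ν] (h : IsSuperregular ν σ m b δ₀)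
    (hσ : ∀ x, Measurable (σ x)) (hb : 0 ≤ b) (x : X) {δ : ℝ} (hδ : 0 < δ)
    (hδδ₀ : ENNReal.ofReal δ < δ₀) :
    ν {y | ENNReal.ofReal δ ≤ σ x y} ≤ ENNReal.ofReal (exp (-(b * δ ^ m))) := by
  refine measure_le_ofReal_exp_neg_of_le_measure_compl
    (measurableSet_le measurable_const (hσ x)) (by positivity) ?_
  simpa only [compl_ofPred, not_le] using h x δ hδ hδδ₀

theorem pi_lt_iInf_le_exp [IsProbabilityMeasure ν] {ρ : X → Y → ℝ≥0∞} {k : ℝ}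
    (h : IsSuperregular ν (fun x y => ρ x y ^ (1 / k)) m b δ₀) (hρ : ∀ x, Measurable (ρ x))
    (hk : 0 < k) (hb : 0 ≤ b) (n : ℕ) (x : X) {t : ℝ} (ht : 0 < t)
    (htδ₀ : ENNReal.ofReal (t ^ (1 / k)) < δ₀) :
    Measure.pi (fun _ : Fin n => ν) {v | ENNReal.ofReal t < ⨅ i, ρ x (v i)} ≤
      ENNReal.ofReal (exp (-(n * b) * t ^ (m / k))) := by
  have hsub : {y | ENNReal.ofReal t < ρ x y} ⊆
      {y | ENNReal.ofReal (t ^ (1 / k)) ≤ ρ x y ^ (1 / k)} := fun y hy => by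
    rw [← ENNReal.ofReal_rpow_of_pos ht]
    exact ENNReal.rpow_le_rpow (le_of_lt hy) (by positivity)
  have hsingle := (measure_mono hsub).trans <|
    h.measure_le_le_exp (fun x => (hρ x).pow_const _) hb x (rpow_pos_of_pos ht _) htδ₀
  rw [← rpow_mul ht.le, one_div_mul_eq_div] at hsingle
  calc Measure.pi (fun _ : Fin n => ν) {v | ENNReal.ofReal t < ⨅ i, ρ x (v i)}
      ≤ ν {y | ENNReal.ofReal t < ρ x y} ^ n := by
        simpa using Measure.pi_lt_iInf_le_pow (ι := Fin n) ν (ρ x) (ENNReal.ofReal t)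
    _ ≤ ENNReal.ofReal (exp (-(b * t ^ (m / k)))) ^ n := by gcongr
    _ = ENNReal.ofReal (exp (-(n * b) * t ^ (m / k))) := by
        rw [← ENNReal.ofReal_pow (exp_pos _).le, ← exp_nat_mul]
        ring_nf

theorem lintegral_iInf_le [IsProbabilityMeasure ν] {ρ : X → Y → ℝ≥0∞} {k : ℝ}
    (h : IsSuperregular ν (fun x y => ρ x y ^ (1 / k)) m b δ₀) (hρ : ∀ x, Measurable (ρ x))
    (hk : 0 < k) (hm : 0 < m) (hb : 0 < b) (hδ₀ : 0 < δ₀) (hδ₀_ne_top : δ₀ ≠ ∞)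
    {β : ℝ≥0∞} (hβ : β ≠ ∞) (hρβ : ∀ x y, ρ x y ≤ β ^ k) {n : ℕ} (hn : 0 < n) (x : X) :
    ∫⁻ v, ⨅ i, ρ x (v i) ∂(Measure.pi fun _ : Fin n => ν) ≤
      ENNReal.ofReal (Gamma (1 + k / m)) * (ENNReal.ofReal b * n) ^ (-(k / m)) +
        (β ^ k - δ₀ ^ k) * expNeg (ENNReal.ofReal b * n * δ₀ ^ m) := by
  set d := δ₀.toReal
  have hd : 0 < d := ENNReal.toReal_pos hδ₀.ne' hδ₀_ne_top
  have hδ₀_eq : δ₀ = ENNReal.ofReal d := (ENNReal.ofReal_toReal hδ₀_ne_top).symm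
  have hβk_eq : β ^ k = ENNReal.ofReal (β.toReal ^ k) := by
    rw [← ENNReal.ofReal_rpow_of_nonneg ENNReal.toReal_nonneg hk.le, ENNReal.ofReal_toReal hβ]
  have hZM : ∀ v : Fin n → Y, ⨅ i, ρ x (v i) ≤ ENNReal.ofReal (β.toReal ^ k) := fun v =>
    hβk_eq ▸ (iInf_le _ ⟨0, hn⟩).trans (hρβ x _)
  have htail : ∀ t, 0 < t → t < d ^ k →
      Measure.pi (fun _ : Fin n => ν) {v | ENNReal.ofReal t < ⨅ i, ρ x (v i)} ≤
        ENNReal.ofReal (exp (-(n * b) * t ^ (m / k))) := fun t ht htd => by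
    refine h.pi_lt_iInf_le_exp hρ hk hb.le n x ht ?_
    rw [hδ₀_eq, ENNReal.ofReal_lt_ofReal_iff hd, one_div,
      rpow_inv_lt_iff_of_pos ht.le hd.le hk]
    exact htd
  refine (lintegral_le_of_meas_lt_le_exp (Measurable.iInf fun i => (hρ x).comp
    (measurable_pi_apply i)) (rpow_pos_of_pos hd k) hZM htail).trans_eq ?_
  have hexpNeg : expNeg (ENNReal.ofReal b * n * δ₀ ^ m) =
      ENNReal.ofReal (exp (-(n * b) * d ^ m)) := by
    rw [hδ₀_eq, ENNReal.ofReal_rpow_of_pos hd, ← ENNReal.ofReal_natCast,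
      ← ENNReal.ofReal_mul hb.le, ← ENNReal.ofReal_mul (by positivity),
      expNeg_ofReal (by positivity), neg_mul, mul_comm b]
  have hgap : β ^ k - δ₀ ^ k = ENNReal.ofReal (β.toReal ^ k - d ^ k) := by
    rw [hβk_eq, hδ₀_eq, ENNReal.ofReal_rpow_of_pos hd,
      ENNReal.ofReal_sub _ (rpow_nonneg hd.le k)]
  rw [lintegral_exp_neg_mul_rpow (by positivity) (div_pos hm hk), one_div_div,
    ← rpow_mul hd.le, mul_div_cancel₀ m hk.ne', hexpNeg, hgap, mul_comm (ENNReal.ofReal b),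
    ENNReal.ofReal_mul (Nat.cast_nonneg _), ENNReal.ofReal_natCast,
    mul_comm (ENNReal.ofReal (exp _))]

end IsSuperregular

end Superregular

/-- Upper bound on the `n`-th quantization error: if `ν` is a
probability measure on `Y` that is `ρ^{1/k}`-superregular of dimension `m` with constants
`b, δ₀`, and `β = sup_{x,y} ρ(x,y)^{1/k} < ∞` whenever `δ₀ < ∞`, then for every random
variable `X` with values in `X` and every `n ∈ ℕ`:
`V_n(X) ≤ Γ(1+k/m)·(b·n)^{-k/m}` if `β ≤ δ₀`, and
`V_n(X) ≤ Γ(1+k/m)·(b·n)^{-k/m} + (β^k − δ₀^k)·e^{-b·n·δ₀^m}` if `β > δ₀`. -/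
theorem quantization_error_upper_bound
    {X Y : Type*} [MeasurableSpace X] [MeasurableSpace Y]
    (ν : Measure Y) [IsProbabilityMeasure ν]
    (ρ : X → Y → ℝ≥0∞) (hρ : Measurable (Function.uncurry ρ))
    (k m b : ℝ) (δ₀ : ℝ≥0∞) (hk : 0 < k) (hm : 0 < m) (hb : 0 < b) (hδ₀ : 0 < δ₀)
    (hsup : ∀ x : X, ∀ t : ℝ, 0 < t → ENNReal.ofReal t < δ₀ →
      ENNReal.ofReal (b * t ^ m) ≤ ν {y | (ρ x y) ^ (1 / k) < ENNReal.ofReal t})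
    (hβ : δ₀ < ∞ → (⨆ x : X, ⨆ y : Y, (ρ x y) ^ (1 / k)) < ∞)
    (μX : Measure X) [IsProbabilityMeasure μX] :
    ∀ n : ℕ, 1 ≤ n →
      ((⨆ x : X, ⨆ y : Y, (ρ x y) ^ (1 / k)) ≤ δ₀ →
        quantErr μX ρ n ≤
          ENNReal.ofReal (Real.Gamma (1 + k / m)) *
            (ENNReal.ofReal b * (n : ℝ≥0∞)) ^ (-(k / m))) ∧
      (δ₀ < (⨆ x : X, ⨆ y : Y, (ρ x y) ^ (1 / k)) →
        quantErr μX ρ n ≤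
          ENNReal.ofReal (Real.Gamma (1 + k / m)) *
            (ENNReal.ofReal b * (n : ℝ≥0∞)) ^ (-(k / m)) +
          ((⨆ x : X, ⨆ y : Y, (ρ x y) ^ (1 / k)) ^ k - δ₀ ^ k) *
            expNeg (ENNReal.ofReal b * (n : ℝ≥0∞) * δ₀ ^ m)) := by
  intro n hn
  have : Nonempty X := nonempty_of_isProbabilityMeasure μX
  set β := ⨆ x : X, ⨆ y : Y, (ρ x y) ^ (1 / k)
  have hreg : IsSuperregular ν (fun x y => ρ x y ^ (1 / k)) m b δ₀ := hsup
  have hδ₀_ne_top : δ₀ ≠ ∞ := hreg.ne_top hm hb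
  have hρβ : ∀ x y, ρ x y ≤ β ^ k := fun x y => by
    rw [← ENNReal.rpow_inv_le_iff hk, ← one_div]
    exact le_iSup₂ (f := fun x y => ρ x y ^ (1 / k)) x y
  have hbound := quantErr_le_of_forall_lintegral_iInf_le hρ μX hn (Measure.pi fun _ => ν)
    (hreg.lintegral_iInf_le (fun x => hρ.comp measurable_prodMk_left) hk hm hb hδ₀ hδ₀_ne_top
      (hβ hδ₀_ne_top.lt_top).ne hρβ hn)
  refine ⟨fun hβδ₀ => ?_, fun _ => hbound⟩
  rwa [tsub_eq_zero_of_le (ENNReal.rpow_le_rpow hβδ₀ hk.le), zero_mul, add_zero] at hbound
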